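/- arXiv:1012.3062 — 2 statements merged into one kernel-verified Lean document; each statement's English description precedes it below -/
import Mathlib

section
/- Assume additionally that b(1) = 1 and that for every prime p and every e ≥ 1 one has b(p^{e+1}) = b(p)·b(p^e) − χ(p)·p^{k−1}·b(p^{e−1}) (the Hecke recursion satisfied by the coefficients of a normalized newform of weight k and nebentypus χ). Then for every prime p > P(m) with p coprime to m and every integer n ≥ 0, a(m·pⁿ) = b(pⁿ)·a(m). -/
/-!
Fix a prime `p > P(m)` not dividing `m` and put `d n = a (m * p ^ n) - b (p ^ n) * a m`. If
`d n = d (n + 1) = 0`, the Hecke recursion turns the Atkin–Swinnerton-Dyer congruence at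
`m * p ^ (n + 1)` into `p ^ ((k - 1) (n + 2)) ∣ d (n + 2)`. The growth bounds give
`|d (n + 2)| < 3 C² A(m)² (p ^ (n + 2)) ^ (k/2 - 1/5)`, which is smaller than
`(p ^ (n + 2)) ^ (k - 1)` by the choice of `P(m)`, so `d (n + 2) = 0`. The same size argument
starts the induction at `d 1`, using the congruence at `m` alone, while `d 0 = 0` as `b 1 = 1`.
-/

theorem abs_sub_mul_lt_three_mul {C M X x y z : ℝ} (hC : 1 ≤ C) (hM : 1 ≤ M) (hX : 0 ≤ X)
    (hx : |x| < C * (M * X)) (hy : |y| < C * X) (hz : |z| < C * M) :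
    |x - y * z| < 3 * C ^ 2 * M ^ 2 * X := by
  have hyz : |y * z| < C * X * (C * M) := by
    rw [abs_mul]
    exact mul_lt_mul'' hy hz (abs_nonneg _) (abs_nonneg _)
  calc |x - y * z| ≤ |x| + |y * z| := abs_sub _ _
    _ < C * (M * X) + C * X * (C * M) := add_lt_add hx hyz
    _ ≤ 3 * C ^ 2 * M ^ 2 * X := by
      have hMX : 0 ≤ M * X := by positivity
      have hCMX : C * (M * X) ≤ C ^ 2 * (M * X) :=
        mul_le_mul_of_nonneg_right (by nlinarith) hMX
      nlinarith [mul_le_mul_of_nonneg_left hM (by positivity : 0 ≤ C ^ 2 * (M * X))]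

theorem eq_mul_of_pow_dvd_sub {k m P q : ℕ} {a b : ℕ → ℤ} {C e : ℝ} (hk : 1 ≤ k)
    (hC : 1 ≤ C) (he : 0 ≤ e) (ha : ∀ n : ℕ, 1 ≤ n → |(a n : ℝ)| < C * (n : ℝ) ^ e)
    (hb : ∀ n : ℕ, 1 ≤ n → |(b n : ℝ)| < C * (n : ℝ) ^ e) (hm : 1 ≤ m)
    (hP : ∀ n : ℕ, P < n →
      3 * C ^ 2 * ((m : ℝ) ^ e) ^ 2 * (n : ℝ) ^ e < (n : ℝ) ^ ((k : ℝ) - 1))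
    (hq : P < q) (hdvd : (q : ℤ) ^ (k - 1) ∣ a (m * q) - b q * a m) :
    a (m * q) = b q * a m := by
  have hq1 : 1 ≤ q := by omega
  have hM : 1 ≤ (m : ℝ) ^ e := Real.one_le_rpow (by exact_mod_cast hm) he
  have hamq : |(a (m * q) : ℝ)| < C * ((m : ℝ) ^ e * (q : ℝ) ^ e) := by
    rw [← Real.mul_rpow (by positivity) (by positivity)]
    exact_mod_cast ha (m * q) (Nat.mul_pos hm hq1)
  have hlt : |((a (m * q) - b q * a m : ℤ) : ℝ)| < ((q ^ (k - 1) : ℤ) : ℝ) := by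
    push_cast
    calc _ < 3 * C ^ 2 * ((m : ℝ) ^ e) ^ 2 * (q : ℝ) ^ e :=
          abs_sub_mul_lt_three_mul hC hM (by positivity) hamq (hb q hq1) (ha m hm)
      _ < (q : ℝ) ^ ((k : ℝ) - 1) := hP q hq
      _ = (q : ℝ) ^ (k - 1) := by rw [← Real.rpow_natCast, Nat.cast_sub hk, Nat.cast_one]
  exact sub_eq_zero.mp (Int.eq_zero_of_abs_lt_dvd hdvd (by exact_mod_cast hlt))

theorem padicValNat_mul_pow_of_not_dvd {p m : ℕ} (hp : p.Prime) (hm : m ≠ 0) (hpm : ¬ p ∣ m)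
    (n : ℕ) : padicValNat p (m * p ^ n) = n := by
  have : Fact p.Prime := ⟨hp⟩
  rw [padicValNat.mul hm (pow_ne_zero n hp.ne_zero), padicValNat.eq_zero_of_not_dvd hpm,
    padicValNat.prime_pow, zero_add]

def ASDCongruence (k : ℕ) (a b χ : ℕ → ℤ) (p : ℕ) : Prop :=
  ∀ n : ℕ, 1 ≤ n → ((p : ℤ) ^ ((k - 1) * (1 + padicValNat p n))) ∣
    (a (n * p) - b p * a n + χ p * (p : ℤ) ^ (k - 1) * (if p ∣ n then a (n / p) else 0))

namespace ASDCongruence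

variable {k p m : ℕ} {a b χ : ℕ → ℤ}

theorem pow_dvd_sub_mul (h : ASDCongruence k a b χ p) (hm : 1 ≤ m) (hpm : ¬ p ∣ m) :
    (p : ℤ) ^ (k - 1) ∣ a (m * p) - b p * a m := by
  simpa [padicValNat.eq_zero_of_not_dvd hpm, hpm] using h m hm

theorem pow_dvd_sub_mul_of_hecke (h : ASDCongruence k a b χ p) (hp : p.Prime) (hm : 1 ≤ m)
    (hpm : ¬ p ∣ m) {n : ℕ}
    (hrec : b (p ^ (n + 2)) = b p * b (p ^ (n + 1)) - χ p * (p : ℤ) ^ (k - 1) * b (p ^ n))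
    (h₀ : a (m * p ^ n) = b (p ^ n) * a m) (h₁ : a (m * p ^ (n + 1)) = b (p ^ (n + 1)) * a m) :
    ((p : ℤ) ^ (n + 2)) ^ (k - 1) ∣ a (m * p ^ (n + 2)) - b (p ^ (n + 2)) * a m := by
  have hcong := h (m * p ^ (n + 1)) (Nat.mul_pos hm (pow_pos hp.pos _))
  have hdvd : p ∣ m * p ^ (n + 1) := dvd_mul_of_dvd_right (dvd_pow_self p n.succ_ne_zero) m
  have hdiv : m * p ^ (n + 1) / p = m * p ^ n := by
    rw [pow_succ, ← mul_assoc, Nat.mul_div_cancel _ hp.pos]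
  rw [padicValNat_mul_pow_of_not_dvd hp (by omega) hpm, if_pos hdvd, hdiv, mul_assoc,
    ← pow_succ] at hcong
  rw [← pow_mul, mul_comm (n + 2)]
  convert hcong using 1
  · ring_nf
  · rw [hrec, h₀, h₁]
    ring

end ASDCongruence

theorem coefficients_agree_on_prime_powers_general
    (k : ℕ) (hk : 2 ≤ k)
    (a b χ : ℕ → ℤ)
    (C : ℝ) (hC : 1 < C)
    (ha : ∀ n : ℕ, 1 ≤ n → |((a n : ℝ))| < C * (n : ℝ) ^ ((k : ℝ) / 2 - 1 / 5))
    (hb : ∀ n : ℕ, 1 ≤ n → |((b n : ℝ))| < C * (n : ℝ) ^ ((k : ℝ) / 2 - 1 / 5))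
    (N₁ : ℕ)
    (hASD : ∀ p : ℕ, p.Prime → N₁ < p → ∀ n : ℕ, 1 ≤ n →
      ((p : ℤ) ^ ((k - 1) * (1 + padicValNat p n))) ∣
        (a (n * p) - b p * a n +
          χ p * (p : ℤ) ^ (k - 1) * (if p ∣ n then a (n / p) else 0)))
    (m : ℕ) (hm : 1 ≤ m)
    (P : ℕ) (hPN : N₁ < P)
    (hP : ∀ n : ℕ, P < n →
      3 * C ^ 2 * ((m : ℝ) ^ ((k : ℝ) / 2 - 1 / 5)) ^ 2 * (n : ℝ) ^ ((k : ℝ) / 2 - 1 / 5)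
        < (n : ℝ) ^ ((k : ℝ) - 1))
    (hb1 : b 1 = 1)
    (hbrec : ∀ p : ℕ, p.Prime → ∀ e : ℕ, 1 ≤ e →
      b (p ^ (e + 1)) = b p * b (p ^ e) - χ p * (p : ℤ) ^ (k - 1) * b (p ^ (e - 1)))
    :
    ∀ p : ℕ, p.Prime → P < p → Nat.Coprime p m → ∀ n : ℕ,
      a (m * p ^ n) = b (p ^ n) * a m := by
  intro p hp hPp hcop n
  have hpm : ¬ p ∣ m := (Nat.Prime.coprime_iff_not_dvd hp).mp hcop
  have hcong : ASDCongruence k a b χ p := hASD p hp (hPN.trans hPp)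
  have he : (0 : ℝ) ≤ k / 2 - 1 / 5 := by
    have : (2 : ℝ) ≤ k := by exact_mod_cast hk
    linarith
  have hsize : ∀ q, P < q → (q : ℤ) ^ (k - 1) ∣ a (m * q) - b q * a m →
      a (m * q) = b q * a m := fun q => eq_mul_of_pow_dvd_sub (by omega) hC.le he ha hb hm hP
  suffices h : ∀ n, a (m * p ^ n) = b (p ^ n) * a m ∧
      a (m * p ^ (n + 1)) = b (p ^ (n + 1)) * a m from (h n).1
  intro n
  induction n with
  | zero => simpa [hb1] using hsize p hPp (hcong.pow_dvd_sub_mul hm hpm)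
  | succ n ih =>
    refine ⟨ih.2, hsize _ (hPp.trans_le (Nat.le_self_pow (by omega) p)) ?_⟩
    exact_mod_cast hcong.pow_dvd_sub_mul_of_hecke hp hm hpm
      (by simpa using hbrec p hp (n + 1) (by omega)) ih.1 ih.2

theorem coefficients_agree_on_prime_powers
    (k : ℕ) (hk : 2 ≤ k)
    (a b χ : ℕ → ℤ)
    (hχ : ∀ n : ℕ, χ n = -1 ∨ χ n = 0 ∨ χ n = 1)
    (C : ℝ) (hC : 1 < C)
    (ha : ∀ n : ℕ, 1 ≤ n → |((a n : ℝ))| < C * (n : ℝ) ^ ((k : ℝ) / 2 - 1 / 5))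
    (hb : ∀ n : ℕ, 1 ≤ n → |((b n : ℝ))| < C * (n : ℝ) ^ ((k : ℝ) / 2 - 1 / 5))
    (N₁ : ℕ)
    (hASD : ∀ p : ℕ, p.Prime → N₁ < p → ∀ n : ℕ, 1 ≤ n →
      ((p : ℤ) ^ ((k - 1) * (1 + padicValNat p n))) ∣
        (a (n * p) - b p * a n +
          χ p * (p : ℤ) ^ (k - 1) * (if p ∣ n then a (n / p) else 0)))
    (m : ℕ) (hm : 1 ≤ m) (ham : a m ≠ 0)
    (P : ℕ) (hPN : N₁ < P)
    (hP : ∀ n : ℕ, P < n →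
      3 * C ^ 2 * ((m : ℝ) ^ ((k : ℝ) / 2 - 1 / 5)) ^ 2 * (n : ℝ) ^ ((k : ℝ) / 2 - 1 / 5)
        < (n : ℝ) ^ ((k : ℝ) - 1))
    (hb1 : b 1 = 1)
    (hbrec : ∀ p : ℕ, p.Prime → ∀ e : ℕ, 1 ≤ e →
      b (p ^ (e + 1)) = b p * b (p ^ e) - χ p * (p : ℤ) ^ (k - 1) * b (p ^ (e - 1)))
    :
    ∀ p : ℕ, p.Prime → P < p → Nat.Coprime p m → ∀ n : ℕ,
      a (m * p ^ n) = b (p ^ n) * a m :=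
  coefficients_agree_on_prime_powers_general k hk a b χ C hC ha hb N₁ hASD m hm P hPN hP hb1 hbrec
end

section
/- Let K be a positive integer, γ = [[1,0],[0,K]] ∈ GL₂(ℚ), and let G be a finite-index subgroup of SL₂(ℤ) contained in Γ₀(K). Then γ⁻¹Gγ is a subgroup of SL₂(ℤ) contained in Γ⁰(K), and the congruence closure of γ⁻¹Gγ equals γ⁻¹Gᶜγ, where Gᶜ is the congruence closure of G. -/
open scoped MatrixGroups ModularForm Real Manifold Topology Pointwise
open Complex CongruenceSubgroup UpperHalfPlane

noncomputable section

/-- `Γc` is the congruence closure of `Γ`: the smallest congruence subgroup of `SL(2, ℤ)`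
containing `Γ`. -/
def IsCongruenceClosure (Γ Γc : Subgroup SL(2, ℤ)) : Prop :=
  Γ ≤ Γc ∧ IsCongruenceSubgroup Γc ∧
    ∀ H : Subgroup SL(2, ℤ), Γ ≤ H → IsCongruenceSubgroup H → Γc ≤ H

/-- `T` is a set of right coset representatives of `B` in the set `D`: `T ⊆ D` and every
`g ∈ D` lies in the right coset `B·t` of exactly one `t ∈ T`. -/
def IsRightTransversal {A : Type*} [Group A] (B : Subgroup A) (D T : Set A) : Prop :=
  T ⊆ D ∧ ∀ g ∈ D, ∃! t, t ∈ T ∧ g * t⁻¹ ∈ B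

/-- `f` is a cusp form of weight `k` for `Γ`: holomorphic on `ℍ`, weight-`k` slash invariant
under `Γ`, and vanishing at all the cusps. -/
def IsCuspFormWt (k : ℤ) (Γ : Subgroup SL(2, ℤ)) (f : ℍ → ℂ) : Prop :=
  MDifferentiable 𝓘(ℂ) 𝓘(ℂ) f ∧ (∀ γ ∈ Γ, f ∣[k] γ = f) ∧
    ∀ A : SL(2, ℤ), IsZeroAtImInfty (f ∣[k] A)

/-- `f ∈ S_k^{prim}(Γ)`: the trace of `f` from `Γ` to the congruence closure `Γᶜ` of `Γ`,
namely `∑_{γ ∈ T} f ∣[k] γ` over a set `T` of right coset representatives of `Γ` in `Γᶜ`,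
vanishes. -/
def IsPrimNoncong (k : ℤ) (Γ : Subgroup SL(2, ℤ)) (f : ℍ → ℂ) : Prop :=
  ∀ Γc : Subgroup SL(2, ℤ), IsCongruenceClosure Γ Γc →
    ∀ T : Finset SL(2, ℤ), IsRightTransversal Γ (Γc : Set SL(2, ℤ)) (T : Set SL(2, ℤ)) →
      ∑ γ ∈ T, f ∣[k] γ = 0

/-- The natural embedding of `SL(2, ℤ)` into `GL (Fin 2) ℚ`. -/
def toGLQ : SL(2, ℤ) →* GL (Fin 2) ℚ :=
  Matrix.SpecialLinearGroup.toGL.comp (Matrix.SpecialLinearGroup.map (Int.castRingHom ℚ))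

/-- The image in `GL (Fin 2) ℚ` of the conjugate `γ G γ⁻¹` of a subgroup `G` of `SL(2, ℤ)`
by the element `γ ∈ GL (Fin 2) ℚ`. -/
def conjQ (γ : GL (Fin 2) ℚ) (G : Subgroup SL(2, ℤ)) : Subgroup (GL (Fin 2) ℚ) :=
  (G.map toGLQ).map (MulAut.conj γ).toMonoidHom

/-- The subgroup `γ G γ⁻¹ ∩ SL(2, ℤ)` of `SL(2, ℤ)`. -/
def conjSL (γ : GL (Fin 2) ℚ) (G : Subgroup SL(2, ℤ)) : Subgroup SL(2, ℤ) :=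
  (conjQ γ G).comap toGLQ

/-- The diagonal matrix `[[1, 0], [0, K]]` as an element of `GL (Fin 2) ℚ`. -/
def diagK (K : ℕ) (hK : 0 < K) : GL (Fin 2) ℚ :=
  Matrix.GeneralLinearGroup.mkOfDetNeZero !![1, 0; 0, (K : ℚ)] (by
    simp [Matrix.det_fin_two_of]
    positivity)

/-! Conjugation by `γ ∈ GL₂(ℚ)` sends congruence subgroups of `SL₂(ℤ)` to congruence subgroups
(`IsCongruenceSubgroup.conjGL`), and on a subgroup whose conjugate lies in `SL₂(ℤ)` it is undone by
conjugation by `γ⁻¹`. Hence it carries the congruence closure of such a subgroup onto the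
congruence closure of its conjugate. For `γ = diag(1, K)` one has
`γ⁻¹ [[a, b], [c, d]] γ = [[a, K b], [c / K, d]]`, which is integral on `Γ₀(K)`; this covers `Gᶜ`
too, since `Γ₀(K)` is a congruence subgroup containing `G`. -/

open Matrix

lemma Matrix.GeneralLinearGroup.map_injective {n R S : Type*} [Fintype n] [DecidableEq n]
    [CommRing R] [CommRing S] {f : R →+* S} (hf : Function.Injective f) :
    Function.Injective (GeneralLinearGroup.map (n := n) f) := fun _ _ h ↦
  Units.ext <| Matrix.ext fun i j ↦ hf (congrArg (fun g : GL n S ↦ g i j) h)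

lemma toGLQ_injective : Function.Injective toGLQ := SpecialLinearGroup.mapGL_injective

lemma mem_conjQ {γ : GL (Fin 2) ℚ} {G : Subgroup SL(2, ℤ)} {y : GL (Fin 2) ℚ} :
    y ∈ conjQ γ G ↔ ∃ g ∈ G, γ * toGLQ g * γ⁻¹ = y := by
  simp [conjQ, MulAut.conj_apply]

lemma mem_conjSL {γ : GL (Fin 2) ℚ} {G : Subgroup SL(2, ℤ)} {x : SL(2, ℤ)} :
    x ∈ conjSL γ G ↔ ∃ g ∈ G, γ * toGLQ g * γ⁻¹ = toGLQ x :=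
  mem_conjQ

lemma map_ratCastHom_toGLQ (x : SL(2, ℤ)) :
    (toGLQ x).map (Rat.castHom ℝ) =
      SpecialLinearGroup.toGL (SpecialLinearGroup.map (Int.castRingHom ℝ) x) :=
  SpecialLinearGroup.map_mapGL x

lemma conjSL_eq_conjGL (γ : GL (Fin 2) ℚ) (G : Subgroup SL(2, ℤ)) :
    conjSL γ G = conjGL G (γ⁻¹.map (Rat.castHom ℝ)) := by
  ext x
  simp only [mem_conjSL, mem_conjGL]
  refine exists_congr fun g ↦ and_congr_right fun _ ↦ ?_
  rw [← map_ratCastHom_toGLQ, ← map_ratCastHom_toGLQ, ← map_inv, ← map_mul, ← map_mul,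
    (GeneralLinearGroup.map_injective Rat.cast_injective).eq_iff,
    inv_inv, mul_inv_eq_iff_eq_mul, mul_assoc γ⁻¹, eq_inv_mul_iff_mul_eq]

lemma isCongruenceSubgroup_conjSL {H : Subgroup SL(2, ℤ)} (hH : IsCongruenceSubgroup H)
    (γ : GL (Fin 2) ℚ) : IsCongruenceSubgroup (conjSL γ H) :=
  conjSL_eq_conjGL γ H ▸ hH.conjGL γ⁻¹

lemma conjSL_mono (γ : GL (Fin 2) ℚ) : Monotone (conjSL γ) := fun _ _ hGH _ hx ↦ by
  obtain ⟨g, hg, hgx⟩ := mem_conjSL.mp hx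
  exact mem_conjSL.mpr ⟨g, hGH hg, hgx⟩

lemma conjSL_inv_conjSL_le (γ : GL (Fin 2) ℚ) (H : Subgroup SL(2, ℤ)) :
    conjSL γ⁻¹ (conjSL γ H) ≤ H := fun x hx ↦ by
  obtain ⟨y, hy, hyx⟩ := mem_conjSL.mp hx
  obtain ⟨h, hh, hhy⟩ := mem_conjSL.mp hy
  have : toGLQ h = toGLQ x := by rw [← hyx, ← hhy]; group
  exact toGLQ_injective this ▸ hh

lemma le_conjSL_inv_conjSL {γ : GL (Fin 2) ℚ} {H : Subgroup SL(2, ℤ)}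
    (hH : conjQ γ H ≤ toGLQ.range) : H ≤ conjSL γ⁻¹ (conjSL γ H) := fun h hh ↦ by
  obtain ⟨y, hy⟩ := hH (mem_conjQ.mpr ⟨h, hh, rfl⟩)
  refine mem_conjSL.mpr ⟨y, mem_conjSL.mpr ⟨h, hh, hy.symm⟩, ?_⟩
  rw [hy]; group

theorem isCongruenceClosure_conjSL {γ : GL (Fin 2) ℚ} {G Gc : Subgroup SL(2, ℤ)}
    (hGc : IsCongruenceClosure G Gc) (hG : conjQ γ G ≤ toGLQ.range) :
    IsCongruenceClosure (conjSL γ G) (conjSL γ Gc) := by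
  obtain ⟨hGGc, hcong, hmin⟩ := hGc
  refine ⟨conjSL_mono γ hGGc, isCongruenceSubgroup_conjSL hcong γ, fun H hGH hH ↦ ?_⟩
  have hGcH : Gc ≤ conjSL γ⁻¹ H :=
    hmin _ ((le_conjSL_inv_conjSL hG).trans (conjSL_mono _ hGH))
      (isCongruenceSubgroup_conjSL hH γ⁻¹)
  calc conjSL γ Gc ≤ conjSL γ (conjSL γ⁻¹ H) := conjSL_mono γ hGcH
    _ ≤ H := by simpa using conjSL_inv_conjSL_le γ⁻¹ H

section diagK

variable {K : ℕ} (hK : 0 < K)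

lemma diagK_inv_conj_toGLQ_eq_iff (g x : SL(2, ℤ)) :
    (diagK K hK)⁻¹ * toGLQ g * (diagK K hK)⁻¹⁻¹ = toGLQ x ↔
      x 0 0 = g 0 0 ∧ x 0 1 = K * g 0 1 ∧ K * x 1 0 = g 1 0 ∧ x 1 1 = g 1 1 := by
  rw [inv_inv, mul_assoc, inv_mul_eq_iff_eq_mul, eq_comm, Units.ext_iff, ← Matrix.ext_iff,
    Fin.forall_fin_two, Fin.forall_fin_two, Fin.forall_fin_two]
  have hK0 : (K : ℚ) ≠ 0 := by positivity
  simp only [diagK, toGLQ, MonoidHom.coe_comp, Function.comp_apply, Fin.isValue, Units.val_mul,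
    GeneralLinearGroup.val_mkOfDetNeZero, SpecialLinearGroup.coe_GL_coe_matrix,
    SpecialLinearGroup.map_apply_coe, RingHom.mapMatrix_apply, Int.coe_castRingHom,
    Matrix.mul_apply, of_apply, cons_val', cons_val_fin_one, cons_val_zero, cons_val_one, map_apply,
    Fin.sum_univ_two, one_mul, mul_one, zero_mul, mul_zero, add_zero, zero_add, Int.cast_inj,
    mul_comm _ (K : ℚ), mul_eq_mul_left_iff, hK0, or_false]
  norm_cast
  tauto

lemma exists_diagK_inv_conj_toGLQ_eq_toGLQ {g : SL(2, ℤ)} (hg : (K : ℤ) ∣ g 1 0) :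
    ∃ x, (diagK K hK)⁻¹ * toGLQ g * (diagK K hK)⁻¹⁻¹ = toGLQ x := by
  obtain ⟨c, hc⟩ := hg
  have hdet : !![g 0 0, K * g 0 1; c, g 1 1].det = 1 := by
    have hg := g.det_coe
    rw [Matrix.det_fin_two, hc] at hg
    rw [Matrix.det_fin_two_of]
    linear_combination hg
  exact ⟨⟨_, hdet⟩, (diagK_inv_conj_toGLQ_eq_iff hK g _).mpr ⟨rfl, rfl, hc.symm, rfl⟩⟩

lemma conjQ_diagK_inv_le_range {H : Subgroup SL(2, ℤ)} (hH : H ≤ Gamma0 K) :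
    conjQ (diagK K hK)⁻¹ H ≤ toGLQ.range := fun y hy ↦ by
  obtain ⟨g, hg, rfl⟩ := mem_conjQ.mp hy
  obtain ⟨x, hx⟩ := exists_diagK_inv_conj_toGLQ_eq_toGLQ hK
    ((ZMod.intCast_zmod_eq_zero_iff_dvd _ _).mp (Gamma0_mem.mp (hH hg)))
  exact ⟨x, hx.symm⟩

lemma dvd_apply_zero_one_of_mem_conjSL_diagK_inv {G : Subgroup SL(2, ℤ)} {x : SL(2, ℤ)}
    (hx : x ∈ conjSL (diagK K hK)⁻¹ G) : (K : ℤ) ∣ x 0 1 := by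
  obtain ⟨g, -, hgx⟩ := mem_conjSL.mp hx
  exact ⟨g 0 1, ((diagK_inv_conj_toGLQ_eq_iff hK g x).mp hgx).2.1⟩

end diagK

theorem congruence_closure_of_conjugate_by_diagonal_general
    (K : ℕ) (hK : 0 < K)
    (G : Subgroup SL(2, ℤ)) (hG0 : G ≤ Gamma0 K)
    (Gc : Subgroup SL(2, ℤ)) (hGc : IsCongruenceClosure G Gc) :
    ∃ G' Gc' : Subgroup SL(2, ℤ),
      G'.map toGLQ = conjQ (diagK K hK)⁻¹ G ∧
      (∀ x ∈ G', (K : ℤ) ∣ x 0 1) ∧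
      Gc'.map toGLQ = conjQ (diagK K hK)⁻¹ Gc ∧
      IsCongruenceClosure G' Gc' := by
  have : NeZero K := ⟨hK.ne'⟩
  have hGc0 : Gc ≤ Gamma0 K := hGc.2.2 _ hG0 (Gamma0_is_congruence K)
  exact ⟨conjSL (diagK K hK)⁻¹ G, conjSL (diagK K hK)⁻¹ Gc,
    Subgroup.map_comap_eq_self (conjQ_diagK_inv_le_range hK hG0),
    fun _ ↦ dvd_apply_zero_one_of_mem_conjSL_diagK_inv hK,
    Subgroup.map_comap_eq_self (conjQ_diagK_inv_le_range hK hGc0),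
    isCongruenceClosure_conjSL hGc (conjQ_diagK_inv_le_range hK hG0)⟩

theorem congruence_closure_of_conjugate_by_diagonal
    (K : ℕ) (hK : 0 < K)
    (G : Subgroup SL(2, ℤ)) (hGfin : G.index ≠ 0) (hG0 : G ≤ Gamma0 K)
    (Gc : Subgroup SL(2, ℤ)) (hGc : IsCongruenceClosure G Gc) :
    ∃ G' Gc' : Subgroup SL(2, ℤ),
      G'.map toGLQ = conjQ (diagK K hK)⁻¹ G ∧
      (∀ x ∈ G', (K : ℤ) ∣ x 0 1) ∧
      Gc'.map toGLQ = conjQ (diagK K hK)⁻¹ Gc ∧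
      IsCongruenceClosure G' Gc' :=
  congruence_closure_of_conjugate_by_diagonal_general K hK G hG0 Gc hGc
end
end
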